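/- For every real number x with 0 ≤ x < 1, the following Euler-type identity holds: ∏_{i=0}^{∞} 1/(1 − 2^{−i} x) = ∑_{i=0}^{∞} x^i · ∏_{j=1}^{i} 1/(1 − 2^{−j}); in particular the infinite product over i ≥ 0 converges and the series on the right converges absolutely. -/

import Mathlib

/-!
The `q`-exponential `e_q(x) = ∑ xⁿ / (q; q)_n` satisfies `(1 - x) e_q(x) = e_q(q x)`, because
`(1 - qⁿ) / (q; q)_n = 1 / (q; q)_{n-1}`. Iterating, `e_q(x)` is the product of the first `n`
factors `1 / (1 - qⁱ x)` times `e_q(qⁿ x)`, and `e_q(qⁿ x) → e_q(0) = 1` by dominated convergence: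
the coefficients `1 / (q; q)_n` are bounded, being the partial products of a convergent product.
-/

open Finset Filter Topology

section NormedField

variable {𝕜 : Type*} [NormedField 𝕜]

theorem one_sub_ne_zero_of_norm_lt_one {a : 𝕜} (ha : ‖a‖ < 1) : 1 - a ≠ 0 :=
  sub_ne_zero.mpr fun h => by simp [← h] at ha

theorem norm_pow_mul_lt_one {q x : 𝕜} (hq : ‖q‖ ≤ 1) (hx : ‖x‖ < 1) (n : ℕ) :
    ‖q ^ n * x‖ < 1 := by
  rw [norm_mul, norm_pow]
  exact (mul_le_of_le_one_left (norm_nonneg x) (pow_le_one₀ (norm_nonneg q) hq)).trans_lt hx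

variable [CompleteSpace 𝕜]

theorem multipliable_one_div_one_sub_of_summable {ι : Type*} {a : ι → 𝕜}
    (ha : Summable fun i => ‖a i‖) : Multipliable fun i => 1 / (1 - a i) := by
  have hsmall : ∀ᶠ i in cofinite, ‖a i‖ ≤ 2⁻¹ :=
    ha.tendsto_cofinite_zero.eventually (ge_mem_nhds (by norm_num))
  have hf : Summable fun i => ‖1 / (1 - a i) - 1‖ := by
    refine (ha.mul_left 2).of_norm_bounded_eventually ?_
    filter_upwards [hsmall] with i hi
    have hlow : 2⁻¹ ≤ ‖1 - a i‖ := by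
      have := norm_sub_norm_le (1 : 𝕜) (a i)
      rw [norm_one] at this
      linarith
    have hpos : 0 < ‖1 - a i‖ := by linarith
    rw [norm_norm, div_sub_one (norm_pos_iff.mp hpos), sub_sub_cancel, norm_div,
      div_le_iff₀ hpos]
    nlinarith [norm_nonneg (a i)]
  simpa using multipliable_one_add_of_summable hf

theorem multipliable_one_div_one_sub_pow_mul {q : 𝕜} (hq : ‖q‖ < 1) (x : 𝕜) :
    Multipliable fun n : ℕ => 1 / (1 - q ^ n * x) :=
  multipliable_one_div_one_sub_of_summable <| by
    simpa [norm_mul, norm_pow] using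
      (summable_geometric_of_lt_one (norm_nonneg q) hq).mul_right ‖x‖

end NormedField

namespace QSeries

variable {𝕜 : Type*} [NormedField 𝕜] {q x : 𝕜}

/-- `1 / (q; q)_n`, the reciprocal of the `q`-Pochhammer symbol. -/
def invQPochhammer (q : 𝕜) (n : ℕ) : 𝕜 :=
  ∏ j ∈ range n, 1 / (1 - q ^ (j + 1))

noncomputable def qExp (q x : 𝕜) : 𝕜 :=
  ∑' n, x ^ n * invQPochhammer q n

theorem invQPochhammer_eq_prod_Icc (q : 𝕜) (n : ℕ) :
    invQPochhammer q n = ∏ j ∈ Icc 1 n, 1 / (1 - q ^ j) := by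
  rw [← Ico_add_one_right_eq_Icc, prod_Ico_eq_prod_range, Nat.add_sub_cancel, invQPochhammer]
  simp only [add_comm 1]

theorem invQPochhammer_succ_mul (hq : ‖q‖ < 1) (n : ℕ) :
    invQPochhammer q (n + 1) * (1 - q ^ (n + 1)) = invQPochhammer q n := by
  have hne : 1 - q ^ (n + 1) ≠ 0 := by
    rw [pow_succ]
    exact one_sub_ne_zero_of_norm_lt_one (norm_pow_mul_lt_one hq.le hq n)
  rw [invQPochhammer, prod_range_succ, mul_assoc, one_div_mul_cancel hne, mul_one]
  rfl

theorem qExp_zero (q : 𝕜) : qExp q 0 = 1 := by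
  simp [qExp, invQPochhammer, zero_pow_eq]

variable [CompleteSpace 𝕜]

theorem exists_norm_invQPochhammer_le (hq : ‖q‖ < 1) :
    ∃ C, ∀ n, ‖invQPochhammer q n‖ ≤ C := by
  have hlim := (multipliable_one_div_one_sub_pow_mul hq q).hasProd.tendsto_prod_nat
  obtain ⟨C, hC⟩ := isBounded_iff_forall_norm_le.mp (Metric.isBounded_range_of_tendsto _ hlim)
  refine ⟨C, fun n => ?_⟩
  have heq : invQPochhammer q n = ∏ j ∈ range n, 1 / (1 - q ^ j * q) := by
    simp only [invQPochhammer, pow_succ]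
  exact heq ▸ hC _ ⟨n, rfl⟩

theorem summable_norm_qExp (hq : ‖q‖ < 1) (hx : ‖x‖ < 1) :
    Summable fun n => ‖x ^ n * invQPochhammer q n‖ := by
  obtain ⟨C, hC⟩ := exists_norm_invQPochhammer_le hq
  refine ((summable_geometric_of_lt_one (norm_nonneg x) hx).mul_right C).of_nonneg_of_le
    (fun n => norm_nonneg _) fun n => ?_
  rw [norm_mul, norm_pow]
  exact mul_le_mul_of_nonneg_left (hC n) (by positivity)

theorem tendsto_qExp_pow_mul (hq : ‖q‖ < 1) (hx : ‖x‖ < 1) :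
    Tendsto (fun n : ℕ => qExp q (q ^ n * x)) atTop (𝓝 1) := by
  have hpow : Tendsto (fun n : ℕ => q ^ n * x) atTop (𝓝 0) := by
    simpa using (tendsto_pow_atTop_nhds_zero_of_norm_lt_one hq).mul_const x
  rw [← qExp_zero q]
  refine tendsto_tsum_of_dominated_convergence (summable_norm_qExp hq hx)
    (fun k => (hpow.pow k).mul_const _) (Eventually.of_forall fun n k => ?_)
  rw [mul_pow, mul_assoc, norm_mul, norm_pow]
  have hqn : ‖q ^ n‖ ≤ 1 := by rw [norm_pow]; exact pow_le_one₀ (norm_nonneg q) hq.le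
  exact mul_le_of_le_one_left (norm_nonneg _) (pow_le_one₀ (norm_nonneg _) hqn)

theorem one_sub_mul_qExp (hq : ‖q‖ < 1) (hx : ‖x‖ < 1) :
    (1 - x) * qExp q x = qExp q (q * x) := by
  have hs := (summable_norm_qExp hq hx).of_norm
  have hqs := (summable_norm_qExp hq (norm_pow_mul_lt_one hq.le hx 1)).of_norm
  rw [pow_one] at hqs
  have hdiff : qExp q x - qExp q (q * x) = x * qExp q x := by
    rw [qExp, qExp, ← hs.tsum_sub hqs, (hs.sub hqs).tsum_eq_zero_add, ← tsum_mul_left]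
    simp only [pow_zero, sub_self, zero_add]
    congr 1 with n
    rw [← invQPochhammer_succ_mul hq n]
    ring
  linear_combination hdiff

theorem qExp_eq_prod_range_mul (hq : ‖q‖ < 1) (hx : ‖x‖ < 1) (n : ℕ) :
    qExp q x = (∏ i ∈ range n, 1 / (1 - q ^ i * x)) * qExp q (q ^ n * x) := by
  induction n with
  | zero => simp
  | succ n ih =>
    have hqnx := norm_pow_mul_lt_one hq.le hx n
    rw [ih, prod_range_succ, pow_succ', mul_assoc q, ← one_sub_mul_qExp hq hqnx, mul_assoc,
      ← mul_assoc (1 / _), one_div_mul_cancel (one_sub_ne_zero_of_norm_lt_one hqnx), one_mul]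

theorem tprod_one_div_one_sub_pow_mul (hq : ‖q‖ < 1) (hx : ‖x‖ < 1) :
    ∏' n : ℕ, 1 / (1 - q ^ n * x) = qExp q x := by
  have hprod := (multipliable_one_div_one_sub_pow_mul hq x).hasProd.tendsto_prod_nat
  have hlim := hprod.mul (tendsto_qExp_pow_mul hq hx)
  rw [mul_one] at hlim
  exact tendsto_nhds_unique hlim
    (tendsto_const_nhds.congr fun n => qExp_eq_prod_range_mul hq hx n)

end QSeries

open QSeries in
theorem euler_q_series_identity (x : ℝ) (h₀ : 0 ≤ x) (h₁ : x < 1) :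
    Multipliable (fun i : ℕ => 1 / (1 - (2 : ℝ) ^ (-(i : ℤ)) * x)) ∧
      Summable (fun i : ℕ =>
        |x ^ i * ∏ j ∈ Finset.Icc 1 i, 1 / (1 - (2 : ℝ) ^ (-(j : ℤ)))|) ∧
      ∏' i : ℕ, 1 / (1 - (2 : ℝ) ^ (-(i : ℤ)) * x)
        = ∑' i : ℕ, x ^ i * ∏ j ∈ Finset.Icc 1 i, 1 / (1 - (2 : ℝ) ^ (-(j : ℤ))) := by
  have hq : ‖(2⁻¹ : ℝ)‖ < 1 := by norm_num
  have hx : ‖x‖ < 1 := by rw [Real.norm_eq_abs]; exact abs_lt.mpr ⟨by linarith, h₁⟩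
  have hpow (i : ℕ) : (2 : ℝ) ^ (-(i : ℤ)) = 2⁻¹ ^ i := by rw [zpow_neg, zpow_natCast, inv_pow]
  simp only [hpow, ← invQPochhammer_eq_prod_Icc, ← Real.norm_eq_abs]
  exact ⟨multipliable_one_div_one_sub_pow_mul hq x, summable_norm_qExp hq hx,
    tprod_one_div_one_sub_pow_mul hq hx⟩
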